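/- Let J⁺ ⊆ ℚ[a0, a1, b0, b1] be generated by a1·b1, b0·b1, a0·a1 − b0·a1, a0·a1 + 8·a1², a0·b1 + 24·b1², 4·b0² + 8·a1·b0 − 3·a0·b0, a0²·a1, a0²·b0, 3·a0³ + 22·a0²·b1. Set λ = (1/10)·(a0 + 2·b0 + 4·b1 + 4·a1). Then λ²·a0 = 0 and λ²·b0 = 0 in ℚ[a0,a1,b0,b1]/J⁺. -/
import Mathlib


open MvPolynomial

noncomputable def a0 : MvPolynomial (Fin 4) ℚ := X 0
noncomputable def a1 : MvPolynomial (Fin 4) ℚ := X 1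
noncomputable def b0 : MvPolynomial (Fin 4) ℚ := X 2
noncomputable def b1 : MvPolynomial (Fin 4) ℚ := X 3

noncomputable def Jplus : Ideal (MvPolynomial (Fin 4) ℚ) :=
  Ideal.span {a1 * b1, b0 * b1, a0 * a1 - b0 * a1, a0 * a1 + 8 * a1 ^ 2,
    a0 * b1 + 24 * b1 ^ 2, 4 * b0 ^ 2 + 8 * a1 * b0 - 3 * a0 * b0,
    a0 ^ 2 * a1, a0 ^ 2 * b0, 3 * a0 ^ 3 + 22 * a0 ^ 2 * b1}

noncomputable def lam : MvPolynomial (Fin 4) ℚ :=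
  C (1 / 10 : ℚ) * (a0 + 2 * b0 + 4 * b1 + 4 * a1)

lemma g0 : a1 * b1 ∈ Jplus := Ideal.subset_span (by simp [Set.mem_insert_iff])
lemma g1 : b0 * b1 ∈ Jplus := Ideal.subset_span (by simp [Set.mem_insert_iff])
lemma g2 : a0 * a1 - b0 * a1 ∈ Jplus := Ideal.subset_span (by simp [Set.mem_insert_iff])
lemma g3 : a0 * a1 + 8 * a1 ^ 2 ∈ Jplus := Ideal.subset_span (by simp [Set.mem_insert_iff])
lemma g4 : a0 * b1 + 24 * b1 ^ 2 ∈ Jplus := Ideal.subset_span (by simp [Set.mem_insert_iff])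
lemma g5 : 4 * b0 ^ 2 + 8 * a1 * b0 - 3 * a0 * b0 ∈ Jplus := Ideal.subset_span (by simp [Set.mem_insert_iff])
lemma g6 : a0 ^ 2 * a1 ∈ Jplus := Ideal.subset_span (by simp [Set.mem_insert_iff])
lemma g7 : a0 ^ 2 * b0 ∈ Jplus := Ideal.subset_span (by simp [Set.mem_insert_iff])
lemma g8 : 3 * a0 ^ 3 + 22 * a0 ^ 2 * b1 ∈ Jplus := Ideal.subset_span (by simp [Set.mem_insert_iff])

lemma mem1 : lam ^ 2 * a0 ∈ Jplus := by
  have hC : (C (1200:ℚ) : MvPolynomial (Fin 4) ℚ) * C (1/10:ℚ) ^ 2 = 12 := by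
    rw [← C_pow, ← C_mul]; norm_num [map_ofNat]
  have key : C (1200:ℚ) * (lam ^ 2 * a0) =
      ((384 : MvPolynomial (Fin 4) ℚ) * a0) * (a1 * b1)
    + ((192 : MvPolynomial (Fin 4) ℚ) * a0) * (b0 * b1)
    + (((-96 : MvPolynomial (Fin 4) ℚ)) * a0) * (a0 * a1 - b0 * a1)
    + ((24 : MvPolynomial (Fin 4) ℚ) * a0) * (a0 * a1 + 8 * a1 ^ 2)
    + ((8 : MvPolynomial (Fin 4) ℚ) * a0) * (a0 * b1 + 24 * b1 ^ 2)
    + ((12 : MvPolynomial (Fin 4) ℚ) * a0) * (4 * b0 ^ 2 + 8 * a1 * b0 - 3 * a0 * b0)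
    + ((168 : MvPolynomial (Fin 4) ℚ)) * (a0 ^ 2 * a1)
    + ((84 : MvPolynomial (Fin 4) ℚ)) * (a0 ^ 2 * b0)
    + ((4 : MvPolynomial (Fin 4) ℚ)) * (3 * a0 ^ 3 + 22 * a0 ^ 2 * b1) := by
    simp only [lam, a0, a1, b0, b1] at *
    linear_combination ((X 0 + 2 * X 2 + 4 * X 3 + 4 * X 1 : MvPolynomial (Fin 4) ℚ) ^ 2 * X 0) * hC
  have h2 : lam ^ 2 * a0 = C ((1:ℚ)/1200) * (C (1200:ℚ) * (lam ^ 2 * a0)) := by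
    rw [← mul_assoc, ← C_mul]; norm_num
  rw [h2, key]
  exact Ideal.mul_mem_left _ _
    (Ideal.add_mem _ (Ideal.add_mem _ (Ideal.add_mem _ (Ideal.add_mem _ (Ideal.add_mem _ (Ideal.add_mem _ (Ideal.add_mem _ (Ideal.add_mem _ (Ideal.mul_mem_left _ _ g0) (Ideal.mul_mem_left _ _ g1)) (Ideal.mul_mem_left _ _ g2)) (Ideal.mul_mem_left _ _ g3)) (Ideal.mul_mem_left _ _ g4)) (Ideal.mul_mem_left _ _ g5)) (Ideal.mul_mem_left _ _ g6)) (Ideal.mul_mem_left _ _ g7)) (Ideal.mul_mem_left _ _ g8))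

lemma mem2 : lam ^ 2 * b0 ∈ Jplus := by
  have hC : (C (1200:ℚ) : MvPolynomial (Fin 4) ℚ) * C (1/10:ℚ) ^ 2 = 12 := by
    rw [← C_pow, ← C_mul]; norm_num [map_ofNat]
  have key : C (1200:ℚ) * (lam ^ 2 * b0) =
      ((384 : MvPolynomial (Fin 4) ℚ) * b0) * (a1 * b1)
    + ((96 : MvPolynomial (Fin 4) ℚ) * a0 + (192 : MvPolynomial (Fin 4) ℚ) * b0 + (192 : MvPolynomial (Fin 4) ℚ) * b1) * (b0 * b1)
    + (((-24 : MvPolynomial (Fin 4) ℚ)) * a0 + ((-192 : MvPolynomial (Fin 4) ℚ)) * a1 + ((-96 : MvPolynomial (Fin 4) ℚ)) * b0) * (a0 * a1 - b0 * a1)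
    + ((24 : MvPolynomial (Fin 4) ℚ) * a0) * (a0 * a1 + 8 * a1 ^ 2)
    + ((21 : MvPolynomial (Fin 4) ℚ) * a0 + (12 : MvPolynomial (Fin 4) ℚ) * b0) * (4 * b0 ^ 2 + 8 * a1 * b0 - 3 * a0 * b0)
    + ((75 : MvPolynomial (Fin 4) ℚ)) * (a0 ^ 2 * b0) := by
    simp only [lam, a0, a1, b0, b1] at *
    linear_combination ((X 0 + 2 * X 2 + 4 * X 3 + 4 * X 1 : MvPolynomial (Fin 4) ℚ) ^ 2 * X 2) * hC
  have h2 : lam ^ 2 * b0 = C ((1:ℚ)/1200) * (C (1200:ℚ) * (lam ^ 2 * b0)) := by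
    rw [← mul_assoc, ← C_mul]; norm_num
  rw [h2, key]
  exact Ideal.mul_mem_left _ _
    (Ideal.add_mem _ (Ideal.add_mem _ (Ideal.add_mem _ (Ideal.add_mem _ (Ideal.add_mem _ (Ideal.mul_mem_left _ _ g0) (Ideal.mul_mem_left _ _ g1)) (Ideal.mul_mem_left _ _ g2)) (Ideal.mul_mem_left _ _ g3)) (Ideal.mul_mem_left _ _ g5)) (Ideal.mul_mem_left _ _ g7))

theorem stmt6 :
    Ideal.Quotient.mk Jplus (lam ^ 2 * a0) = 0 ∧
    Ideal.Quotient.mk Jplus (lam ^ 2 * b0) = 0 :=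
  ⟨(Ideal.Quotient.eq_zero_iff_mem).2 mem1, (Ideal.Quotient.eq_zero_iff_mem).2 mem2⟩
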